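/- In the setting of the VGB tree random walk with κ-multiplicatively-accurate value function V̂, the conductance Φ of the Markov chain satisfies Φ ≥ 1/(4κ²H). -/

import Mathlib

open Finset
open scoped Classical

/-- A node of the autoregressive tree over alphabet `A` with depth `H`. -/
abbrev TreeNode (H : ℕ) (A : Type*) := Σ h : Fin (H + 1), (Fin (h : ℕ) → A)

/-- `p` is the parent of `c` in the autoregressive tree. -/
def IsParent {H : ℕ} {A : Type*} (p c : TreeNode H A) : Prop :=
  ∃ hc : (c.1 : ℕ) = (p.1 : ℕ) + 1,
    ∀ i : Fin (p.1 : ℕ), p.2 i = c.2 (Fin.castLE (by omega) i)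

/-- Adjacency in the autoregressive tree. -/
def TreeAdj {H : ℕ} {A : Type*} (v w : TreeNode H A) : Prop :=
  IsParent v w ∨ IsParent w v

/-- The marginal probability `π_ref(y_{1:h})` of the prefix given by node `v`. -/
noncomputable def nodeMarg {H : ℕ} {A : Type*} [Fintype A]
    (πref : (Fin H → A) → ℝ) (v : TreeNode H A) : ℝ :=
  ∑ z : Fin H → A,
    if ∀ i : Fin (v.1 : ℕ), z (Fin.castLE (Nat.lt_succ_iff.mp v.1.isLt) i) = v.2 i
    then πref z else 0

/-- The unnormalized value `∑_{extensions} π_ref·τ` at node `v`. -/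
noncomputable def nodeVnum {H : ℕ} {A : Type*} [Fintype A]
    (πref τ : (Fin H → A) → ℝ) (v : TreeNode H A) : ℝ :=
  ∑ z : Fin H → A,
    if ∀ i : Fin (v.1 : ℕ), z (Fin.castLE (Nat.lt_succ_iff.mp v.1.isLt) i) = v.2 i
    then πref z * τ z else 0

/-- The true value function `V⋆(y_{1:h}) = E_{π_ref}[τ | y_{1:h}]` at node `v`. -/
noncomputable def nodeVstar {H : ℕ} {A : Type*} [Fintype A]
    (πref τ : (Fin H → A) → ℝ) (v : TreeNode H A) : ℝ :=
  nodeVnum πref τ v / nodeMarg πref v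

/-- The VGB edge weight between two nodes: `π_ref·V̂` evaluated at the deeper
endpoint, and `0` if the nodes are not adjacent. -/
noncomputable def edgeWeight {H : ℕ} {A : Type*} [Fintype A]
    (πref : (Fin H → A) → ℝ) (Vhat : TreeNode H A → ℝ) (v u : TreeNode H A) : ℝ :=
  if IsParent v u then nodeMarg πref u * Vhat u
  else if IsParent u v then nodeMarg πref v * Vhat v
  else 0

/-- The total edge weight incident to node `v`. -/
noncomputable def nodeS {H : ℕ} {A : Type*} [Fintype A]
    (πref : (Fin H → A) → ℝ) (Vhat : TreeNode H A → ℝ) (v : TreeNode H A) : ℝ :=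
  ∑ u : TreeNode H A, edgeWeight πref Vhat v u

/-- The stationary distribution `μ(v) ∝ ∑_{w ~ v} f(v,w)` of the VGB random walk. -/
noncomputable def nodeMu {H : ℕ} {A : Type*} [Fintype A]
    (πref : (Fin H → A) → ℝ) (Vhat : TreeNode H A → ℝ) (v : TreeNode H A) : ℝ :=
  nodeS πref Vhat v / ∑ u : TreeNode H A, nodeS πref Vhat u

/-- The lazy transition kernel of the VGB random walk:
`P(w|v) = f(v,w)/(2·∑_{w'~v} f(v,w'))` for `w ~ v`, and `P(v|v) = 1/2`. -/
noncomputable def nodeP {H : ℕ} {A : Type*} [Fintype A]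
    (πref : (Fin H → A) → ℝ) (Vhat : TreeNode H A → ℝ) (v u : TreeNode H A) : ℝ :=
  if TreeAdj v u then edgeWeight πref Vhat v u / (2 * nodeS πref Vhat v)
  else if u = v then 1 / 2 else 0
set_option linter.unusedSectionVars false

namespace VGBAux

variable {H : ℕ} {A : Type*} [Fintype A]

/-- `z` extends the prefix `v`. -/
def ExtZ (v : TreeNode H A) (z : Fin H → A) : Prop :=
  ∀ i : Fin (v.1 : ℕ), z (Fin.castLE (Nat.lt_succ_iff.mp v.1.isLt) i) = v.2 i

theorem treeNode_ext {v w : TreeNode H A} (h1 : (v.1 : ℕ) = (w.1 : ℕ))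
    (h2 : ∀ i : Fin (v.1 : ℕ), v.2 i = w.2 (Fin.cast h1 i)) : v = w := by
  obtain ⟨⟨n, hn⟩, g⟩ := v
  obtain ⟨⟨m, hm⟩, g'⟩ := w
  simp only [Fin.val_mk] at h1 h2
  subst h1
  have hg : g = g' := funext fun i => h2 i
  subst hg
  rfl

def pathNode (z : Fin H → A) (h : Fin (H + 1)) : TreeNode H A :=
  ⟨h, fun i => z (Fin.castLE (Nat.lt_succ_iff.mp h.isLt) i)⟩

theorem extZ_pathNode (z : Fin H → A) (h : Fin (H + 1)) : ExtZ (pathNode z h) z :=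
  fun _ => rfl

theorem eq_pathNode {v : TreeNode H A} {z : Fin H → A} (hv : ExtZ v z) :
    v = pathNode z v.1 :=
  treeNode_ext rfl fun i => (hv i).symm

theorem pathNode_fst (z : Fin H → A) (h : Fin (H + 1)) :
    ((pathNode z h).1 : ℕ) = (h : ℕ) := rfl

theorem parent_unique {p q c : TreeNode H A} (hp : IsParent p c) (hq : IsParent q c) :
    p = q := by
  obtain ⟨h1, h2⟩ := hp
  obtain ⟨h3, h4⟩ := hq
  refine treeNode_ext (by omega) fun i => ?_
  rw [h2 i]
  exact (h4 (Fin.cast (by omega) i)).symm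

theorem extZ_parent {p c : TreeNode H A} {z : Fin H → A} (hp : IsParent p c)
    (hc : ExtZ c z) : ExtZ p z := by
  intro i
  obtain ⟨h1, h2⟩ := hp
  rw [h2 i]
  exact hc (Fin.castLE (by omega) i)

theorem isParent_pathNode (z : Fin H → A) (h k : Fin (H + 1)) (hk : (k : ℕ) = (h : ℕ) + 1) :
    IsParent (pathNode z h) (pathNode z k) :=
  ⟨hk, fun _ => rfl⟩

theorem depth0_unique {v w : TreeNode H A} (hv : (v.1 : ℕ) = 0) (hw : (w.1 : ℕ) = 0) :
    v = w :=
  treeNode_ext (by omega) (fun i => absurd i.2 (by omega))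

theorem no_child_of_max {u c : TreeNode H A} (hu : (u.1 : ℕ) = H) : ¬ IsParent u c := by
  rintro ⟨h1, -⟩
  have := c.1.isLt
  omega

end VGBAux
namespace VGBAux

variable {H : ℕ} {A : Type*} [Fintype A]

theorem nodeMarg_def (πref : (Fin H → A) → ℝ) (v : TreeNode H A) :
    nodeMarg πref v = ∑ z : Fin H → A, if ExtZ v z then πref z else 0 := by
  unfold nodeMarg ExtZ
  exact Finset.sum_congr rfl fun z _ => by congr

theorem nodeVnum_def (πref τ : (Fin H → A) → ℝ) (v : TreeNode H A) :
    nodeVnum πref τ v = ∑ z : Fin H → A, if ExtZ v z then πref z * τ z else 0 := by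
  unfold nodeVnum ExtZ
  exact Finset.sum_congr rfl fun z _ => by congr

variable {πref τ : (Fin H → A) → ℝ} {Vhat : TreeNode H A → ℝ} {κ : ℝ}

theorem marg_nonneg (hπ : ∀ z, 0 ≤ πref z) (v : TreeNode H A) : 0 ≤ nodeMarg πref v := by
  rw [nodeMarg_def]
  exact Finset.sum_nonneg fun z _ => by split_ifs <;> [exact hπ z; exact le_rfl]

theorem vnum_nonneg (hπ : ∀ z, 0 ≤ πref z) (hτ : ∀ z, 0 ≤ τ z) (v : TreeNode H A) :
    0 ≤ nodeVnum πref τ v := by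
  rw [nodeVnum_def]
  exact Finset.sum_nonneg fun z _ => by
    split_ifs <;> [exact mul_nonneg (hπ z) (hτ z); exact le_rfl]

theorem vnum_of_marg_zero (hπ : ∀ z, 0 ≤ πref z) {v : TreeNode H A}
    (h : nodeMarg πref v = 0) : nodeVnum πref τ v = 0 := by
  rw [nodeMarg_def] at h
  rw [nodeVnum_def]
  apply Finset.sum_eq_zero
  intro z _
  split_ifs with hE
  · have h0 : πref z = 0 := by
      have := (Finset.sum_eq_zero_iff_of_nonneg
        (fun z _ => by split_ifs <;> [exact hπ z; exact le_rfl])).mp h z (Finset.mem_univ z)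
      simpa [hE] using this
    rw [h0, zero_mul]
  · rfl

theorem vstar_nonneg (hπ : ∀ z, 0 ≤ πref z) (hτ : ∀ z, 0 ≤ τ z) (v : TreeNode H A) :
    0 ≤ nodeVstar πref τ v :=
  div_nonneg (vnum_nonneg hπ hτ v) (marg_nonneg hπ v)

section WithVhat

variable (hκ : 1 ≤ κ) (hπ : ∀ z, 0 ≤ πref z) (hτ : ∀ z, 0 ≤ τ z)
  (hVhat : ∀ v : TreeNode H A, 1 ≤ (v.1 : ℕ) →
    ((0 < nodeVstar πref τ v →
        nodeVstar πref τ v / κ ≤ Vhat v ∧ Vhat v ≤ κ * nodeVstar πref τ v) ∧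
      (nodeVstar πref τ v = 0 → Vhat v = 0)))

include hκ hπ hτ hVhat

theorem fBounds {v : TreeNode H A} (hv : 1 ≤ (v.1 : ℕ)) :
    nodeVnum πref τ v / κ ≤ nodeMarg πref v * Vhat v ∧
      nodeMarg πref v * Vhat v ≤ κ * nodeVnum πref τ v := by
  have hκ0 : (0 : ℝ) < κ := by linarith
  rcases (marg_nonneg hπ v).eq_or_lt with h0 | hpos
  · have hN : nodeVnum πref τ v = 0 := vnum_of_marg_zero hπ h0.symm
    rw [hN, ← h0]
    simp
  · have hVs : nodeVstar πref τ v = nodeVnum πref τ v / nodeMarg πref v := rfl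
    have hMN : nodeMarg πref v * nodeVstar πref τ v = nodeVnum πref τ v := by
      rw [hVs]; field_simp
    rcases (vnum_nonneg hπ hτ v).eq_or_lt with hN0 | hNpos
    · have hVs0 : nodeVstar πref τ v = 0 := by rw [hVs, ← hN0, zero_div]
      rw [(hVhat v hv).2 hVs0, mul_zero, ← hN0]
      simp
    · have hVspos : 0 < nodeVstar πref τ v := div_pos hNpos hpos
      obtain ⟨hlo, hhi⟩ := (hVhat v hv).1 hVspos
      have hlo' : nodeVstar πref τ v ≤ Vhat v * κ := (div_le_iff₀ hκ0).mp hlo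
      constructor
      · rw [div_le_iff₀ hκ0]
        nlinarith [mul_le_mul_of_nonneg_left hlo' hpos.le]
      · nlinarith [mul_le_mul_of_nonneg_left hhi hpos.le]

theorem vhat_nonneg {v : TreeNode H A} (hv : 1 ≤ (v.1 : ℕ)) : 0 ≤ Vhat v := by
  rcases (vstar_nonneg hπ hτ v).eq_or_lt with h | h
  · rw [(hVhat v hv).2 h.symm]
  · have := ((hVhat v hv).1 h).1
    have hκ0 : (0 : ℝ) < κ := by linarith
    have : 0 < nodeVstar πref τ v / κ := div_pos h hκ0
    linarith [((hVhat v hv).1 h).1]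

theorem edgeWeight_nonneg (u v : TreeNode H A) : 0 ≤ edgeWeight πref Vhat u v := by
  unfold edgeWeight
  split_ifs with h1 h2
  · have hd : 1 ≤ (v.1 : ℕ) := by have := h1.1; omega
    exact mul_nonneg (marg_nonneg hπ v) (vhat_nonneg hκ hπ hτ hVhat hd)
  · have hd : 1 ≤ (u.1 : ℕ) := by have := h2.1; omega
    exact mul_nonneg (marg_nonneg hπ u) (vhat_nonneg hκ hπ hτ hVhat hd)
  · exact le_rfl

theorem nodeS_nonneg (u : TreeNode H A) : 0 ≤ nodeS πref Vhat u :=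
  Finset.sum_nonneg fun v _ => edgeWeight_nonneg hκ hπ hτ hVhat u v

end WithVhat

theorem edgeWeight_symm (u v : TreeNode H A) :
    edgeWeight πref Vhat u v = edgeWeight πref Vhat v u := by
  unfold edgeWeight
  by_cases h1 : IsParent u v <;> by_cases h2 : IsParent v u <;> simp [h1, h2]
  exfalso; have := h1.1; have := h2.1; omega

theorem parentSum_le {c : ℝ} (hc : 0 ≤ c) (u : TreeNode H A) :
    ∑ v : TreeNode H A, (if IsParent v u then c else 0) ≤ c := by
  by_cases hex : ∃ p : TreeNode H A, IsParent p u
  · obtain ⟨p, hp⟩ := hex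
    calc ∑ v : TreeNode H A, (if IsParent v u then c else 0)
        ≤ ∑ v : TreeNode H A, (if v = p then c else 0) := by
          apply Finset.sum_le_sum
          intro v _
          by_cases h : IsParent v u
          · rw [if_pos h, if_pos (parent_unique h hp)]
          · rw [if_neg h]; split_ifs <;> [exact hc; exact le_rfl]
      _ = c := by simp
  · push_neg at hex
    rw [Finset.sum_eq_zero fun v _ => if_neg (hex v)]
    exact hc

theorem childSum_le (hπ : ∀ z, 0 ≤ πref z) (hτ : ∀ z, 0 ≤ τ z) (u : TreeNode H A) :
    ∑ v : TreeNode H A, (if IsParent u v then nodeVnum πref τ v else 0) ≤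
      nodeVnum πref τ u := by
  have hrw : ∀ v : TreeNode H A, (if IsParent u v then nodeVnum πref τ v else 0)
      = ∑ z : Fin H → A, if IsParent u v ∧ ExtZ v z then πref z * τ z else 0 := by
    intro v
    by_cases h : IsParent u v
    · rw [if_pos h, nodeVnum_def]
      exact Finset.sum_congr rfl fun z _ => by simp [h]
    · simp [h]
  rw [Finset.sum_congr rfl fun v _ => hrw v, Finset.sum_comm, nodeVnum_def]
  apply Finset.sum_le_sum
  intro z _
  by_cases hE : ExtZ u z
  · rw [if_pos hE]
    by_cases huH : (u.1 : ℕ) < H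
    · set c : TreeNode H A := pathNode z ⟨(u.1 : ℕ) + 1, by omega⟩ with hcdef
      calc ∑ v : TreeNode H A, (if IsParent u v ∧ ExtZ v z then πref z * τ z else 0)
          ≤ ∑ v : TreeNode H A, (if v = c then πref z * τ z else 0) := by
            apply Finset.sum_le_sum
            intro v _
            by_cases h : IsParent u v ∧ ExtZ v z
            · rw [if_pos h, if_pos]
              have h1 := eq_pathNode h.2
              have h2 : v.1 = (⟨(u.1 : ℕ) + 1, by omega⟩ : Fin (H + 1)) :=
                Fin.ext h.1.1
              rw [h1, h2]
            · rw [if_neg h]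
              split_ifs <;> [exact mul_nonneg (hπ z) (hτ z); exact le_rfl]
        _ = πref z * τ z := by simp
    · rw [Finset.sum_eq_zero fun v _ => if_neg fun h =>
        no_child_of_max (by omega) h.1]
      exact mul_nonneg (hπ z) (hτ z)
  · rw [if_neg hE]
    apply le_of_eq
    apply Finset.sum_eq_zero
    intro v _
    exact if_neg fun h => hE (extZ_parent h.1 h.2)

end VGBAux
namespace VGBAux

variable {H : ℕ} {A : Type*} [Fintype A]

/-- number of nodes of the path of `z` lying in `S` (as a real). -/
noncomputable def kR (S : Finset (TreeNode H A)) (z : Fin H → A) : ℝ :=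
  ∑ h : Fin (H + 1), if pathNode z h ∈ S then (1 : ℝ) else 0

/-- number of boundary (parent-outside, child-inside) edges on the path of `z`. -/
noncomputable def bR (S : Finset (TreeNode H A)) (z : Fin H → A) : ℝ :=
  ∑ u ∈ S, ∑ v ∈ Sᶜ, if IsParent v u ∧ ExtZ u z then (1 : ℝ) else 0

theorem bR_nonneg (S : Finset (TreeNode H A)) (z : Fin H → A) : 0 ≤ bR S z :=
  Finset.sum_nonneg fun u _ => Finset.sum_nonneg fun v _ => by split_ifs <;> norm_num

theorem kR_le_mul (S : Finset (TreeNode H A)) (hS : ∀ v ∈ S, 1 ≤ (v.1 : ℕ))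
    (z : Fin H → A) : kR S z ≤ (H : ℝ) * bR S z := by
  by_cases hs : (Finset.univ.filter fun h : Fin (H + 1) => pathNode z h ∈ S).Nonempty
  · -- kR ≤ H
    have hk_le : kR S z ≤ (H : ℝ) := by
      unfold kR
      calc ∑ h : Fin (H + 1), (if pathNode z h ∈ S then (1 : ℝ) else 0)
          ≤ ∑ h : Fin (H + 1), (if h = (0 : Fin (H + 1)) then (0 : ℝ) else 1) := by
            apply Finset.sum_le_sum
            intro h _
            by_cases h0 : h = (0 : Fin (H + 1))
            · rw [if_pos h0]
              split_ifs with hmem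
              · exfalso
                have h1 := hS _ hmem
                rw [pathNode_fst] at h1
                rw [h0] at h1
                simp at h1
              · exact le_rfl
            · rw [if_neg h0]
              split_ifs <;> norm_num
        _ = (H : ℝ) := by
            have hcong : ∀ h : Fin (H + 1),
                (if h = (0 : Fin (H + 1)) then (0 : ℝ) else 1)
                  = 1 - (if h = (0 : Fin (H + 1)) then (1 : ℝ) else 0) := by
              intro h; split_ifs <;> ring
            rw [Finset.sum_congr rfl fun h _ => hcong h, Finset.sum_sub_distrib,
              Finset.sum_const, Finset.sum_ite_eq' Finset.univ (0 : Fin (H + 1))]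
            simp only [Finset.mem_univ, if_pos, Finset.card_univ, Fintype.card_fin,
              nsmul_eq_mul, mul_one]
            push_cast
            ring
    -- bR ≥ 1
    have hb1 : (1 : ℝ) ≤ bR S z := by
      set s := Finset.univ.filter fun h : Fin (H + 1) => pathNode z h ∈ S with hsdef
      set h0 := s.min' hs with hh0
      have h0S : pathNode z h0 ∈ S := (Finset.mem_filter.mp (s.min'_mem hs)).2
      have h0pos : 1 ≤ (h0 : ℕ) := hS _ h0S
      set p : TreeNode H A := pathNode z ⟨(h0 : ℕ) - 1, by omega⟩ with hpdef
      have hpnot : p ∉ S := by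
        intro hmem
        have hm2 : (⟨(h0 : ℕ) - 1, by omega⟩ : Fin (H + 1)) ∈ s :=
          Finset.mem_filter.mpr ⟨Finset.mem_univ _, hmem⟩
        have hle := Finset.min'_le s _ hm2
        have hle2 : (h0 : ℕ) ≤ (h0 : ℕ) - 1 := Fin.le_def.mp hle
        omega
      have hpar : IsParent p (pathNode z h0) :=
        isParent_pathNode z _ h0 (by simp; omega)
      calc (1 : ℝ)
          = (if IsParent p (pathNode z h0) ∧ ExtZ (pathNode z h0) z then (1 : ℝ) else 0) := by
            rw [if_pos ⟨hpar, extZ_pathNode z h0⟩]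
        _ ≤ ∑ v ∈ Sᶜ, (if IsParent v (pathNode z h0) ∧ ExtZ (pathNode z h0) z
              then (1 : ℝ) else 0) :=
            Finset.single_le_sum
              (f := fun v => if IsParent v (pathNode z h0) ∧ ExtZ (pathNode z h0) z
                then (1 : ℝ) else 0)
              (fun v _ => by split_ifs <;> norm_num)
              (Finset.mem_compl.mpr hpnot)
        _ ≤ bR S z := by
            unfold bR
            exact Finset.single_le_sum
              (f := fun u => ∑ v ∈ Sᶜ, if IsParent v u ∧ ExtZ u z then (1 : ℝ) else 0)
              (fun u _ => Finset.sum_nonneg fun v _ => by split_ifs <;> norm_num)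
              h0S
    calc kR S z ≤ (H : ℝ) := hk_le
      _ = (H : ℝ) * 1 := by ring
      _ ≤ (H : ℝ) * bR S z := by
          exact mul_le_mul_of_nonneg_left hb1 (Nat.cast_nonneg H)
  · have hnone : ∀ h : Fin (H + 1), pathNode z h ∉ S := by
      intro h hmem
      exact hs ⟨h, Finset.mem_filter.mpr ⟨Finset.mem_univ h, hmem⟩⟩
    have : kR S z = 0 := Finset.sum_eq_zero fun h _ => if_neg (hnone h)
    rw [this]
    exact mul_nonneg (Nat.cast_nonneg H) (bR_nonneg S z)

end VGBAux
namespace VGBAux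

variable {H : ℕ} {A : Type*} [Fintype A]

theorem key {κ : ℝ} (hκ : 1 ≤ κ)
    (πref τ : (Fin H → A) → ℝ)
    (hπ : ∀ z, 0 ≤ πref z) (hτ : ∀ z, 0 ≤ τ z)
    (Vhat : TreeNode H A → ℝ)
    (hVhat : ∀ v : TreeNode H A, 1 ≤ (v.1 : ℕ) →
      ((0 < nodeVstar πref τ v →
          nodeVstar πref τ v / κ ≤ Vhat v ∧ Vhat v ≤ κ * nodeVstar πref τ v) ∧
        (nodeVstar πref τ v = 0 → Vhat v = 0)))
    (S : Finset (TreeNode H A)) (hS : ∀ v ∈ S, 1 ≤ (v.1 : ℕ)) :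
    ∑ u ∈ S, nodeS πref Vhat u ≤
      2 * κ ^ 2 * H * ∑ u ∈ S, ∑ v ∈ Sᶜ, edgeWeight πref Vhat u v := by
  have hκ0 : (0 : ℝ) < κ := by linarith
  -- Step A : per-node volume bound
  have stepA : ∀ u ∈ S, nodeS πref Vhat u ≤ 2 * κ * nodeVnum πref τ u := by
    intro u hu
    have hfu := fBounds hκ hπ hτ hVhat (hS u hu)
    have hpoint : ∀ v : TreeNode H A, edgeWeight πref Vhat u v ≤
        κ * ((if IsParent u v then nodeVnum πref τ v else 0) +
          (if IsParent v u then nodeVnum πref τ u else 0)) := by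
      intro v
      by_cases h1 : IsParent u v
      · have hv1 : 1 ≤ (v.1 : ℕ) := by have := h1.1; omega
        have h2 : ¬ IsParent v u := by rintro ⟨h, -⟩; have := h1.1; omega
        have hfv := fBounds hκ hπ hτ hVhat hv1
        unfold edgeWeight
        rw [if_pos h1, if_pos h1, if_neg h2]
        have := hfv.2
        linarith
      · by_cases h2 : IsParent v u
        · unfold edgeWeight
          rw [if_neg h1, if_pos h2, if_neg h1, if_pos h2]
          have := hfu.2
          linarith
        · unfold edgeWeight
          rw [if_neg h1, if_neg h2, if_neg h1, if_neg h2]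
          simp
    calc nodeS πref Vhat u = ∑ v : TreeNode H A, edgeWeight πref Vhat u v := rfl
      _ ≤ ∑ v : TreeNode H A,
            κ * ((if IsParent u v then nodeVnum πref τ v else 0) +
              (if IsParent v u then nodeVnum πref τ u else 0)) :=
          Finset.sum_le_sum fun v _ => hpoint v
      _ = κ * ((∑ v : TreeNode H A, (if IsParent u v then nodeVnum πref τ v else 0)) +
            ∑ v : TreeNode H A, (if IsParent v u then nodeVnum πref τ u else 0)) := by
          rw [← Finset.mul_sum, ← Finset.sum_add_distrib]
      _ ≤ κ * (nodeVnum πref τ u + nodeVnum πref τ u) := by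
          apply mul_le_mul_of_nonneg_left _ hκ0.le
          exact add_le_add (childSum_le hπ hτ u) (parentSum_le (vnum_nonneg hπ hτ u) u)
      _ = 2 * κ * nodeVnum πref τ u := by ring
  -- Step B : volume as a leaf sum
  have stepB : ∑ u ∈ S, nodeVnum πref τ u
      = ∑ z : Fin H → A, πref z * τ z * kR S z := by
    have hz : ∀ z : Fin H → A,
        ∑ u ∈ S, (if ExtZ u z then πref z * τ z else 0) = πref z * τ z * kR S z := by
      intro z
      have hcard : (S.filter fun u => ExtZ u z).card
          = (Finset.univ.filter fun h : Fin (H + 1) => pathNode z h ∈ S).card := by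
        apply Finset.card_bij' (fun u _ => u.1) (fun h _ => pathNode z h)
        · intro u hu
          simp only [Finset.mem_filter, Finset.mem_univ, true_and]
          rw [← eq_pathNode (Finset.mem_filter.mp hu).2]
          exact (Finset.mem_filter.mp hu).1
        · intro h hh
          simp only [Finset.mem_filter] at hh ⊢
          exact ⟨(hh.2 : pathNode z h ∈ S), extZ_pathNode z h⟩
        · intro u hu
          exact (eq_pathNode (Finset.mem_filter.mp hu).2).symm
        · intro h _
          rfl
      have hk : kR S z
          = ((Finset.univ.filter fun h : Fin (H + 1) => pathNode z h ∈ S).card : ℝ) := by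
        unfold kR
        rw [← Finset.sum_filter]
        simp
      calc ∑ u ∈ S, (if ExtZ u z then πref z * τ z else 0)
          = ∑ u ∈ S.filter (fun u => ExtZ u z), πref z * τ z :=
            (Finset.sum_filter _ _).symm
        _ = ((S.filter fun u => ExtZ u z).card : ℝ) * (πref z * τ z) := by
            rw [Finset.sum_const, nsmul_eq_mul]
        _ = πref z * τ z * kR S z := by rw [hcard, hk]; ring
    calc ∑ u ∈ S, nodeVnum πref τ u
        = ∑ u ∈ S, ∑ z : Fin H → A, (if ExtZ u z then πref z * τ z else 0) :=
          Finset.sum_congr rfl fun u _ => nodeVnum_def πref τ u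
      _ = ∑ z : Fin H → A, ∑ u ∈ S, (if ExtZ u z then πref z * τ z else 0) :=
          Finset.sum_comm
      _ = ∑ z : Fin H → A, πref z * τ z * kR S z :=
          Finset.sum_congr rfl fun z _ => hz z
  -- Step C : cut lower bound as a leaf sum
  have stepC : ∑ z : Fin H → A, πref z * τ z * bR S z
      ≤ κ * ∑ u ∈ S, ∑ v ∈ Sᶜ, edgeWeight πref Vhat u v := by
    have h1 : ∀ u v : TreeNode H A, (if IsParent v u then nodeVnum πref τ u else 0)
        = ∑ z : Fin H → A, (if IsParent v u ∧ ExtZ u z then πref z * τ z else 0) := by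
      intro u v
      by_cases h : IsParent v u
      · rw [if_pos h, nodeVnum_def]
        exact Finset.sum_congr rfl fun z _ => by simp [h]
      · simp [h]
    have hC2 : ∑ z : Fin H → A, πref z * τ z * bR S z
        = ∑ u ∈ S, ∑ v ∈ Sᶜ, (if IsParent v u then nodeVnum πref τ u else 0) := by
      calc ∑ z : Fin H → A, πref z * τ z * bR S z
          = ∑ z : Fin H → A, ∑ u ∈ S, ∑ v ∈ Sᶜ,
              (if IsParent v u ∧ ExtZ u z then πref z * τ z else 0) := by
            apply Finset.sum_congr rfl
            intro z _
            unfold bR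
            rw [Finset.mul_sum]
            apply Finset.sum_congr rfl
            intro u _
            rw [Finset.mul_sum]
            apply Finset.sum_congr rfl
            intro v _
            rw [mul_ite, mul_one, mul_zero]
        _ = ∑ u ∈ S, ∑ z : Fin H → A, ∑ v ∈ Sᶜ,
              (if IsParent v u ∧ ExtZ u z then πref z * τ z else 0) := Finset.sum_comm
        _ = ∑ u ∈ S, ∑ v ∈ Sᶜ, ∑ z : Fin H → A,
              (if IsParent v u ∧ ExtZ u z then πref z * τ z else 0) :=
            Finset.sum_congr rfl fun u _ => Finset.sum_comm
        _ = ∑ u ∈ S, ∑ v ∈ Sᶜ, (if IsParent v u then nodeVnum πref τ u else 0) :=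
            Finset.sum_congr rfl fun u _ => Finset.sum_congr rfl fun v _ => (h1 u v).symm
    rw [hC2, Finset.mul_sum]
    apply Finset.sum_le_sum
    intro u hu
    rw [Finset.mul_sum]
    apply Finset.sum_le_sum
    intro v hv
    by_cases h : IsParent v u
    · have h2 : ¬ IsParent u v := by rintro ⟨hh, -⟩; have := h.1; omega
      have hE : edgeWeight πref Vhat u v = nodeMarg πref u * Vhat u := by
        unfold edgeWeight
        rw [if_neg h2, if_pos h]
      have hb := (fBounds hκ hπ hτ hVhat (hS u hu)).1
      rw [if_pos h, hE]
      rw [div_le_iff₀ hκ0] at hb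
      linarith
    · rw [if_neg h]
      exact mul_nonneg hκ0.le (edgeWeight_nonneg hκ hπ hτ hVhat u v)
  -- final chain
  have hcut_nn : 0 ≤ ∑ u ∈ S, ∑ v ∈ Sᶜ, edgeWeight πref Vhat u v :=
    Finset.sum_nonneg fun u _ =>
      Finset.sum_nonneg fun v _ => edgeWeight_nonneg hκ hπ hτ hVhat u v
  calc ∑ u ∈ S, nodeS πref Vhat u
      ≤ ∑ u ∈ S, 2 * κ * nodeVnum πref τ u := Finset.sum_le_sum stepA
    _ = 2 * κ * ∑ u ∈ S, nodeVnum πref τ u := by rw [Finset.mul_sum]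
    _ = 2 * κ * ∑ z : Fin H → A, πref z * τ z * kR S z := by rw [stepB]
    _ ≤ 2 * κ * ∑ z : Fin H → A, πref z * τ z * ((H : ℝ) * bR S z) := by
        apply mul_le_mul_of_nonneg_left _ (by positivity)
        apply Finset.sum_le_sum
        intro z _
        exact mul_le_mul_of_nonneg_left (kR_le_mul S hS z) (mul_nonneg (hπ z) (hτ z))
    _ = 2 * κ * (H : ℝ) * ∑ z : Fin H → A, πref z * τ z * bR S z := by
        rw [Finset.mul_sum, Finset.mul_sum]
        exact Finset.sum_congr rfl fun z _ => by ring
    _ ≤ 2 * κ * (H : ℝ) * (κ * ∑ u ∈ S, ∑ v ∈ Sᶜ, edgeWeight πref Vhat u v) := by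
        apply mul_le_mul_of_nonneg_left stepC (by positivity)
    _ = 2 * κ ^ 2 * H * ∑ u ∈ S, ∑ v ∈ Sᶜ, edgeWeight πref Vhat u v := by ring

end VGBAux

/-- **Conductance lower bound for the VGB random walk.** If the approximate value
function `V̂` is `κ`-multiplicatively accurate, then the conductance `Φ` of the VGB
chain satisfies `Φ ≥ 1/(4κ²H)`: for every set `S` of nodes with `0 < μ(S) ≤ 1/2`,
the boundary flow satisfies `[∑_{u∈S, v∉S} μ(u)P(v|u)] / μ(S) ≥ 1/(4κ²H)`. -/
theorem vgb_conductance {H : ℕ} {A : Type*} [Fintype A]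
    (hH : 1 ≤ H) (κ : ℝ) (hκ : 1 ≤ κ)
    (πref τ : (Fin H → A) → ℝ)
    (hπ : ∀ z, 0 ≤ πref z) (hπ1 : ∑ z, πref z = 1)
    (hτ : ∀ z, 0 ≤ τ z) (hτpos : 0 < ∑ z, πref z * τ z)
    (Vhat : TreeNode H A → ℝ)
    (hVhat : ∀ v : TreeNode H A, 1 ≤ (v.1 : ℕ) →
      ((0 < nodeVstar πref τ v →
          nodeVstar πref τ v / κ ≤ Vhat v ∧ Vhat v ≤ κ * nodeVstar πref τ v) ∧
        (nodeVstar πref τ v = 0 → Vhat v = 0))) :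
    ∀ S : Finset (TreeNode H A),
      0 < ∑ v ∈ S, nodeMu πref Vhat v → ∑ v ∈ S, nodeMu πref Vhat v ≤ 1 / 2 →
      1 / (4 * κ ^ 2 * H) ≤
        (∑ u ∈ S, ∑ v ∈ Sᶜ, nodeMu πref Vhat u * nodeP πref Vhat u v) /
          ∑ u ∈ S, nodeMu πref Vhat u := by
  intro S hpos hhalf
  have hκ0 : (0 : ℝ) < κ := by linarith
  have hHpos : (0 : ℝ) < (H : ℝ) := by exact_mod_cast hH
  set Z : ℝ := ∑ u : TreeNode H A, nodeS πref Vhat u with hZdef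
  have hSnn : ∀ u : TreeNode H A, 0 ≤ nodeS πref Vhat u :=
    VGBAux.nodeS_nonneg hκ hπ hτ hVhat
  have hZnn : 0 ≤ Z := Finset.sum_nonneg fun u _ => hSnn u
  have hZpos : 0 < Z := by
    rcases hZnn.eq_or_lt with h0 | h
    · exfalso
      have : ∑ v ∈ S, nodeMu πref Vhat v = 0 := by
        apply Finset.sum_eq_zero
        intro v _
        unfold nodeMu
        rw [← hZdef, ← h0, div_zero]
      linarith
    · exact h
  set vol : ℝ := ∑ u ∈ S, nodeS πref Vhat u with hvoldef
  have hmuS : ∑ v ∈ S, nodeMu πref Vhat v = vol / Z := by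
    unfold nodeMu
    rw [← Finset.sum_div, ← hZdef, ← hvoldef]
  have hvolpos : 0 < vol := by
    by_contra hle
    push_neg at hle
    have : vol / Z ≤ 0 := div_nonpos_of_nonpos_of_nonneg hle hZnn
    rw [← hmuS] at this
    linarith
  have hvolhalf : vol ≤ Z / 2 := by
    rw [hmuS] at hhalf
    rw [div_le_div_iff₀ hZpos (by norm_num : (0:ℝ) < 2)] at hhalf
    linarith
  set Cut : ℝ := ∑ u ∈ S, ∑ v ∈ Sᶜ, edgeWeight πref Vhat u v with hCutdef
  have hCutnn : 0 ≤ Cut :=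
    Finset.sum_nonneg fun u _ => Finset.sum_nonneg fun v _ =>
      VGBAux.edgeWeight_nonneg hκ hπ hτ hVhat u v
  -- numerator identity
  have hnum : ∑ u ∈ S, ∑ v ∈ Sᶜ, nodeMu πref Vhat u * nodeP πref Vhat u v
      = Cut / (2 * Z) := by
    rw [hCutdef, Finset.sum_div]
    apply Finset.sum_congr rfl
    intro u hu
    rw [Finset.sum_div]
    apply Finset.sum_congr rfl
    intro v hv
    have hne : v ≠ u := by
      intro h
      rw [h] at hv
      exact (Finset.mem_compl.mp hv) hu
    unfold nodeMu nodeP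
    by_cases hadj : TreeAdj u v
    · rw [if_pos hadj]
      by_cases hSu : nodeS πref Vhat u = 0
      · have hw : edgeWeight πref Vhat u v = 0 := by
          have hall := (Finset.sum_eq_zero_iff_of_nonneg
            (fun w _ => VGBAux.edgeWeight_nonneg hκ hπ hτ hVhat u w)).mp hSu
          exact hall v (Finset.mem_univ v)
        rw [hSu, hw]
        simp
      · rw [← hZdef]
        field_simp
    · have hw : edgeWeight πref Vhat u v = 0 := by
        unfold TreeAdj at hadj
        push_neg at hadj
        unfold edgeWeight
        rw [if_neg hadj.1, if_neg hadj.2]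
      rw [if_neg hadj, if_neg hne, hw]
      simp
  rw [hnum, hmuS]
  -- reduce to vol ≤ 2κ²H·Cut
  have hkey2 : vol ≤ 2 * κ ^ 2 * (H : ℝ) * Cut := by
    by_cases hroot : ∀ v ∈ S, 1 ≤ ((v.1 : Fin (H + 1)) : ℕ)
    · exact VGBAux.key hκ πref τ hπ hτ Vhat hVhat S hroot
    · push_neg at hroot
      obtain ⟨v₀, hv₀S, hv₀⟩ := hroot
      have hv₀0 : ((v₀.1 : Fin (H + 1)) : ℕ) = 0 := by omega
      have hcomp : ∀ v ∈ Sᶜ, 1 ≤ ((v.1 : Fin (H + 1)) : ℕ) := by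
        intro v hv
        by_contra hlt
        push_neg at hlt
        have : v = v₀ := VGBAux.depth0_unique (by omega) hv₀0
        rw [this] at hv
        exact (Finset.mem_compl.mp hv) hv₀S
      have hkeyC := VGBAux.key hκ πref τ hπ hτ Vhat hVhat Sᶜ hcomp
      rw [compl_compl] at hkeyC
      have hsym : ∑ u ∈ Sᶜ, ∑ v ∈ S, edgeWeight πref Vhat u v = Cut := by
        rw [Finset.sum_comm, hCutdef]
        exact Finset.sum_congr rfl fun u _ => Finset.sum_congr rfl fun v _ =>
          VGBAux.edgeWeight_symm v u
      rw [hsym] at hkeyC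
      have hvolc : ∑ u ∈ Sᶜ, nodeS πref Vhat u = Z - vol := by
        have := Finset.sum_add_sum_compl S (nodeS πref Vhat)
        rw [← hZdef, ← hvoldef] at this
        linarith
      rw [hvolc] at hkeyC
      linarith
  have hrw : Cut / (2 * Z) / (vol / Z) = Cut / (2 * vol) := by
    field_simp
  rw [hrw]
  have h4 : (0 : ℝ) < 4 * κ ^ 2 * (H : ℝ) :=
    mul_pos (mul_pos (by norm_num) (pow_pos hκ0 2)) hHpos
  have h2v : (0 : ℝ) < 2 * vol := by linarith
  rw [div_le_div_iff₀ h4 h2v]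
  nlinarith
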